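/- Let U, V be polynomials of degree N whose product has nonvanishing (N+1)-st derivative on [-1,1], and let the interpolation nodes be N+1 distinct points symmetric about 0 in [-1,1] with N ≥ 1. Define W = I^N(UV) (interpolant on [-1,1]) and W_L = I^N((UV) ∘ σ_L) where σ_L(ξ) = (ξ-1)/2 (interpolant of the restricted product at the same nodes). Then W ∘ σ_L ≠ W_L as polynomials. -/

import Mathlib

open Polynomial Finset

/-!
If `W ∘ σ_L = W_L`, then evaluating at the nodes shows that the interpolation error `UV - W`
vanishes at every `σ_L(s_i) ∈ [-1, 0]`. The error already vanishes at the `N + 1` nodes and its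
`(N + 1)`-st derivative is that of `UV`, so by iterated Rolle it has no further zero in `[-1, 1]`:
`σ_L` maps the node set injectively into, hence onto, itself. But `σ_L` pulls every point above
its fixed point `-1` strictly down, so the largest node is `-1` and all nodes coincide.
-/

namespace Polynomial

theorem iteratedDeriv_eval {𝕜 : Type*} [NontriviallyNormedField 𝕜] (n : ℕ) (p : 𝕜[X]) :
    iteratedDeriv n (fun x => p.eval x) = fun x => (derivative^[n] p).eval x := by
  induction n with
  | zero => rfl
  | succ n ih =>
    funext x
    rw [iteratedDeriv_succ, ih, Function.iterate_succ_apply']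
    exact Polynomial.deriv _

theorem exists_mem_Icc_eval_iterate_derivative_eq_zero :
    ∀ (k : ℕ) (p : ℝ[X]) (t : Fin (k + 1) → ℝ), StrictMono t → (∀ i, p.eval (t i) = 0) →
      ∃ x ∈ Set.Icc (t 0) (t (Fin.last k)), (derivative^[k] p).eval x = 0
  | 0, p, t, _, hroot => ⟨t 0, Set.left_mem_Icc.2 le_rfl, hroot 0⟩
  | k + 1, p, t, ht, hroot => by
    have hrolle : ∀ i : Fin (k + 1), ∃ c ∈ Set.Ioo (t i.castSucc) (t i.succ),
        p.derivative.eval c = 0 := fun i => by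
      obtain ⟨c, hc, hc0⟩ := exists_deriv_eq_zero (ht Fin.castSucc_lt_succ)
        p.continuous.continuousOn (by rw [hroot, hroot])
      exact ⟨c, hc, by rwa [Polynomial.deriv] at hc0⟩
    choose u hu hu0 using hrolle
    have hu_mono : StrictMono u := fun i j hij =>
      (hu i).2.trans_le <| (ht.monotone (Fin.succ_le_castSucc_iff.2 hij)).trans (hu j).1.le
    obtain ⟨x, hx, hx0⟩ := exists_mem_Icc_eval_iterate_derivative_eq_zero k _ u hu_mono hu0
    refine ⟨x, ⟨(hu 0).1.le.trans hx.1, hx.2.trans ?_⟩, by rwa [Function.iterate_succ_apply]⟩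
    simpa only [Fin.succ_last] using (hu (Fin.last k)).2.le

theorem exists_mem_eval_iterate_derivative_eq_zero {S : Set ℝ} (hS : S.OrdConnected)
    {p : ℝ[X]} {T : Finset ℝ} {k : ℕ} (hTk : #T = k + 1) (hTS : ↑T ⊆ S)
    (hroot : ∀ x ∈ T, p.eval x = 0) :
    ∃ x ∈ S, (derivative^[k] p).eval x = 0 := by
  set t := T.orderEmbOfFin hTk
  obtain ⟨x, hx, hx0⟩ := exists_mem_Icc_eval_iterate_derivative_eq_zero k p t t.strictMono
    fun i => hroot _ (T.orderEmbOfFin_mem hTk i)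
  exact ⟨x, hS.out (hTS (T.orderEmbOfFin_mem hTk _)) (hTS (T.orderEmbOfFin_mem hTk _)) hx, hx0⟩

end Polynomial

namespace Lagrange

variable {ι : Type*} [DecidableEq ι]

theorem mem_image_of_eval_interpolate_eq {S : Set ℝ} (hS : S.OrdConnected) {s : Finset ι}
    {v : ι → ℝ} (hvs : Set.InjOn v s) (hvS : ∀ i ∈ s, v i ∈ S) {P : ℝ[X]}
    (hP : ∀ x ∈ S, (derivative^[#s] P).eval x ≠ 0) {x : ℝ} (hx : x ∈ S)
    (hPx : (interpolate s v fun i => P.eval (v i)).eval x = P.eval x) :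
    x ∈ v '' s := by
  by_contra hxs
  set E := P - interpolate s v fun i => P.eval (v i)
  have hcard : #(insert x (s.image v)) = #s + 1 := by
    rw [card_insert_of_notMem (by simpa using hxs), card_image_of_injOn hvs]
  have hroot : ∀ y ∈ insert x (s.image v), E.eval y = 0 := by
    simp only [mem_insert, mem_image]
    rintro y (rfl | ⟨i, hi, rfl⟩)
    · rw [eval_sub, hPx, sub_self]
    · rw [eval_sub, eval_interpolate_at_node _ hvs hi, sub_self]
  have hsub : ↑(insert x (s.image v)) ⊆ S := by
    rw [coe_insert, coe_image, Set.insert_subset_iff, Set.image_subset_iff]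
    exact ⟨hx, hvS⟩
  obtain ⟨y, hy, hy0⟩ := exists_mem_eval_iterate_derivative_eq_zero hS hcard hsub hroot
  rw [iterate_derivative_sub,
    iterate_derivative_eq_zero_of_degree_lt (degree_interpolate_lt _ hvs), sub_zero] at hy0
  exact hP y hy hy0

end Lagrange

theorem Set.Finite.subset_Iic_of_surjOn {α : Type*} [LinearOrder α] {T : Set α} (hT : T.Finite)
    {f : α → α} (hf : Monotone f) {a : α} (hfa : ∀ x, a < x → f x < x)
    (hsurj : Set.SurjOn f T T) : T ⊆ Set.Iic a := by
  rcases T.eq_empty_or_nonempty with rfl | hne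
  · exact Set.empty_subset _
  obtain ⟨m, hm, hmax⟩ := T.exists_max_image id hT hne
  obtain ⟨y, hy, rfl⟩ := hsurj hm
  have hya : f y ≤ a := not_lt.1 fun ha => (hfa _ ha).not_ge (hf (hmax y hy))
  exact fun z hz => (hmax z hz).trans hya

theorem subinterval_interpolant_ne_restricted_interpolant_general
    (N : ℕ) (hN : 1 ≤ N) (U V : ℝ[X])
    (hderiv : ∀ x ∈ Set.Icc (-1 : ℝ) 1,
        iteratedDeriv (N + 1) (fun y => (U * V).eval y) x ≠ 0)
    (s : Fin (N + 1) → ℝ) (hs : Function.Injective s)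
    (hmem : ∀ i, s i ∈ Set.Icc (-1 : ℝ) 1) :
    (Lagrange.interpolate Finset.univ s (fun i => (U * V).eval (s i))).comp
        (C (1/2 : ℝ) * (X - 1))
      ≠ Lagrange.interpolate Finset.univ s
          (fun i => ((U * V).comp (C (1/2 : ℝ) * (X - 1))).eval (s i)) := by
  intro heq
  set σ : ℝ → ℝ := fun x => (x - 1) / 2
  have hσ : ∀ x, (C (1/2 : ℝ) * (X - 1)).eval x = σ x := fun x => by simp [σ]; ring
  have hinj : Set.InjOn s (univ : Finset (Fin (N + 1))) := hs.injOn
  have hP : ∀ x ∈ Set.Icc (-1 : ℝ) 1, (derivative^[N + 1] (U * V)).eval x ≠ 0 := by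
    simpa only [iteratedDeriv_eval] using hderiv
  have hagree : ∀ i, (Lagrange.interpolate univ s fun i => (U * V).eval (s i)).eval (σ (s i))
      = (U * V).eval (σ (s i)) := fun i => by
    simpa only [eval_comp, hσ, Lagrange.eval_interpolate_at_node _ hinj (mem_univ i)]
      using congrArg (eval (s i)) heq
  have hmaps : Set.MapsTo σ (Set.range s) (Set.range s) := by
    rintro _ ⟨i, rfl⟩
    have hσi : σ (s i) ∈ Set.Icc (-1 : ℝ) 1 := by
      simp only [σ, Set.mem_Icc]; constructor <;> linarith [(hmem i).1, (hmem i).2]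
    simpa using Lagrange.mem_image_of_eval_interpolate_eq Set.ordConnected_Icc hinj
      (fun i _ => hmem i) (by rwa [card_univ, Fintype.card_fin]) hσi (hagree i)
  have hsurj : Set.SurjOn σ (Set.range s) (Set.range s) :=
    ((Set.finite_range s).injOn_iff_bijOn_of_mapsTo hmaps).1
      (fun x _ y _ hxy => by simpa [σ] using hxy) |>.surjOn
  have hle : Set.range s ⊆ Set.Iic (-1) := (Set.finite_range s).subset_Iic_of_surjOn
    (fun x y hxy => by simp only [σ]; linarith) (fun x hx => by simp only [σ]; linarith) hsurj
  have hall : ∀ i, s i = -1 := fun i => le_antisymm (hle ⟨i, rfl⟩) (hmem i).1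
  exact absurd (hs ((hall 0).trans (hall ⟨1, by omega⟩).symm)) (by simp [Fin.ext_iff])

/-- Appendix theorem: with symmetric distinct nodes in `[-1,1]`, `N ≥ 1`, and
`U, V` of degree `N` whose product has nonvanishing `(N+1)`-st derivative on
`[-1,1]`, the restriction of the global interpolant `W = I^N(UV)` to the left
half-interval (via `σ_L(ξ) = (ξ-1)/2`) differs from the interpolant
`W_L = I^N((UV) ∘ σ_L)` of the restricted product. -/
theorem subinterval_interpolant_ne_restricted_interpolant
    (N : ℕ) (hN : 1 ≤ N) (U V : ℝ[X]) (hU : U.natDegree = N) (hV : V.natDegree = N)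
    (hderiv : ∀ x ∈ Set.Icc (-1 : ℝ) 1,
        iteratedDeriv (N + 1) (fun y => (U * V).eval y) x ≠ 0)
    (s : Fin (N + 1) → ℝ) (hs : Function.Injective s)
    (hmem : ∀ i, s i ∈ Set.Icc (-1 : ℝ) 1)
    (hsym : ∀ i, ∃ j, s j = -(s i)) :
    (Lagrange.interpolate Finset.univ s (fun i => (U * V).eval (s i))).comp
        (C (1/2 : ℝ) * (X - 1))
      ≠ Lagrange.interpolate Finset.univ s
          (fun i => ((U * V).comp (C (1/2 : ℝ) * (X - 1))).eval (s i)) :=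
  subinterval_interpolant_ne_restricted_interpolant_general N hN U V hderiv s hs hmem
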